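/- arXiv:1408.2125 — 4 statements merged into one kernel-verified Lean document; each statement's English description precedes it below -/
import Mathlib

section
/- Any product of elements of the normalising groupoid of a commutative *-subalgebra is again a partial isometry; in particular every power (uv)^k of a product of two such partial isometries is a partial isometry, and hence its operator norm is either 0 or 1. -/
private lemma aux_groupoid {M : Type*} [Monoid M] [StarMul M] (u v q : M)
    (hu : u * star u * u = u) (hv : v * star v * v = v)
    (h1 : (v * q * star v) * (star u * u) = (star u * u) * (v * q * star v))
    (h2 : q * (star v * v) = (star v * v) * q) :
    (u * v) * q * star (u * v) * (u * v) = (u * v) * q := by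
  have e1 : (u * v) * q * star (u * v) * (u * v)
      = u * ((v * q * star v) * (star u * u) * v) := by
    simp only [star_mul, mul_assoc]
  rw [e1, h1]
  have e2 : u * ((star u * u) * (v * q * star v) * v)
      = (u * star u * u) * (v * (q * (star v * v))) := by
    simp only [mul_assoc]
  rw [e2, hu, h2]
  have e3 : u * (v * ((star v * v) * q)) = u * (v * star v * v) * q := by
    simp only [mul_assoc]
  rw [e3, hv]

private lemma aux_norm {A : Type*} [NormedRing A] [StarRing A] [CStarRing A]
    (a : A) (h : a * star a * a = a) : ‖a‖ = 0 ∨ ‖a‖ = 1 := by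
  have h2 : (star a * a) * (star a * a) = star a * a := by
    calc (star a * a) * (star a * a) = star a * (a * star a * a) := by
          simp only [mul_assoc]
      _ = star a * a := by rw [h]
  have h3 : ‖star a * a‖ * ‖star a * a‖ = ‖star a * a‖ := by
    conv_lhs => rw [← CStarRing.norm_star_mul_self (E := A) (x := star a * a)]
    rw [star_mul, star_star]
    rw [h2]
  have h4 : ‖star a * a‖ = ‖a‖ * ‖a‖ := CStarRing.norm_star_mul_self
  set t := ‖a‖ with ht
  have ht0 : 0 ≤ t := norm_nonneg a
  have h5 : (t * t) * (t * t) = t * t := by rw [← h4]; exact h3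
  have h6 : (t * t) * (t * t - 1) = 0 := by ring_nf; linarith [h5]
  rcases mul_eq_zero.mp h6 with h7 | h7
  · left; exact mul_self_eq_zero.mp h7
  · have h8 : t * t = 1 := by linarith
    have h9 : (t - 1) * (t + 1) = 0 := by ring_nf; linarith [h8]
    rcases mul_eq_zero.mp h9 with h10 | h10
    · right; linarith
    · right; linarith

/-- The product of two partial isometries in the normalising groupoid of a commutative
*-subalgebra of `B(H)` is a partial isometry; in particular every power `(uv)^k` is a
partial isometry and hence has operator norm `0` or `1`. -/
theorem stmt_8 {H : Type*} [NormedAddCommGroup H] [InnerProductSpace ℂ H]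
    [CompleteSpace H]
    (P : StarSubalgebra ℂ (H →L[ℂ] H)) (hP : ∀ x ∈ P, ∀ y ∈ P, x * y = y * x)
    (u v : H →L[ℂ] H)
    (hu1 : u * star u * u = u) (hu2 : u * star u ∈ P) (hu3 : star u * u ∈ P)
    (hu4 : ∀ a ∈ P, u * a * star u ∈ P)
    (hv1 : v * star v * v = v) (hv2 : v * star v ∈ P) (hv3 : star v * v ∈ P)
    (hv4 : ∀ a ∈ P, v * a * star v ∈ P) :
    ((u * v) * star (u * v) * (u * v) = u * v) ∧
      ∀ k : ℕ, (u * v) ^ k * star ((u * v) ^ k) * (u * v) ^ k = (u * v) ^ k ∧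
        (‖(u * v) ^ k‖ = 0 ∨ ‖(u * v) ^ k‖ = 1) := by
  -- key: for every k, (uv)^k is a partial isometry and (uv)^k (uv)^k* ∈ P
  have key : ∀ k : ℕ, (u * v) ^ k * star ((u * v) ^ k) * (u * v) ^ k = (u * v) ^ k ∧
      (u * v) ^ k * star ((u * v) ^ k) ∈ P := by
    intro k
    induction k with
    | zero => refine ⟨by simp, ?_⟩; simpa using one_mem P
    | succ k ih =>
      obtain ⟨ih1, ih2⟩ := ih
      set q : H →L[ℂ] H := (u * v) ^ k * star ((u * v) ^ k) with hq
      have hqP : q ∈ P := ih2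
      have h1 : (v * q * star v) * (star u * u) = (star u * u) * (v * q * star v) :=
        hP _ (hv4 q hqP) _ hu3
      have h2 : q * (star v * v) = (star v * v) * q := hP _ hqP _ hv3
      have main := aux_groupoid u v q hu1 hv1 h1 h2
      have hpow : (u * v) ^ (k + 1) = (u * v) * (u * v) ^ k := pow_succ' (u * v) k
      constructor
      · calc (u * v) ^ (k + 1) * star ((u * v) ^ (k + 1)) * (u * v) ^ (k + 1)
            = ((u * v) * q * star (u * v) * (u * v)) * (u * v) ^ k := by
              rw [hpow, hq]; simp only [star_mul, mul_assoc]
          _ = ((u * v) * q) * (u * v) ^ k := by rw [main]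
          _ = (u * v) * (q * (u * v) ^ k) := by rw [mul_assoc]
          _ = (u * v) * (u * v) ^ k := by rw [ih1]
          _ = (u * v) ^ (k + 1) := hpow.symm
      · have e : (u * v) ^ (k + 1) * star ((u * v) ^ (k + 1))
            = u * (v * q * star v) * star u := by
          rw [hpow, hq]; simp only [star_mul, mul_assoc]
        rw [e]
        exact hu4 _ (hv4 q hqP)
  have base : (u * v) * star (u * v) * (u * v) = u * v := by
    have h1 : (v * 1 * star v) * (star u * u) = (star u * u) * (v * 1 * star v) := by
      rw [mul_one]; exact hP _ hv2 _ hu3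
    have h2 : (1 : H →L[ℂ] H) * (star v * v) = (star v * v) * 1 := by
      rw [one_mul, mul_one]
    have := aux_groupoid u v 1 hu1 hv1 h1 h2
    simpa using this
  refine ⟨base, fun k => ⟨(key k).1, ?_⟩⟩
  exact aux_norm _ (key k).1
end

section
/- Let A be a singular MASA in a von Neumann algebra M (i.e. every unitary u ∈ M with uAu* = A lies in A), and let p be a projection in A. Then pAp is a singular MASA in pMp: every unitary u of pMp with u(pAp)u* = pAp lies in pAp. -/
/-- If `A` is a singular MASA of a von Neumann algebra `M` (every unitary of `M`
normalising `A` lies in `A`) and `p ∈ A` is a projection, then `pAp` is a singular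
MASA in the corner `pMp`: every unitary `u` of `pMp` with `u (pAp) u* = pAp` lies
in `pAp`. -/
theorem stmt_11 {H : Type*} [NormedAddCommGroup H] [InnerProductSpace ℂ H]
    [CompleteSpace H] (M : VonNeumannAlgebra H) (A : Set (H →L[ℂ] H))
    (hA : {x | x ∈ M ∧ ∀ a ∈ A, a * x = x * a} = A)
    (hsing : ∀ u : H →L[ℂ] H, u ∈ M → u * star u = 1 → star u * u = 1 →
      (fun x => u * x * star u) '' A = A → u ∈ A)
    (p : H →L[ℂ] H) (hpA : p ∈ A) (hproj : p * p = p) (hpstar : star p = p) :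
    ∀ u : H →L[ℂ] H, (∃ m ∈ M, u = p * m * p) →
      u * star u = p → star u * u = p →
      (fun x => u * x * star u) '' {x | ∃ a ∈ A, x = p * a * p}
        = {x | ∃ a ∈ A, x = p * a * p} →
      ∃ a ∈ A, u = p * a * p := by
  intro u hu huu' hu'u himg
  have memA : ∀ x : H →L[ℂ] H, (x ∈ M ∧ ∀ a ∈ A, a * x = x * a) ↔ x ∈ A :=
    fun x => Set.ext_iff.mp hA x
  have hAM : ∀ x ∈ A, x ∈ M := fun x hx => ((memA x).mpr hx).1
  have hAc : ∀ x ∈ A, ∀ a ∈ A, a * x = x * a := fun x hx => ((memA x).mpr hx).2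
  have hmulA : ∀ x ∈ A, ∀ y ∈ A, x * y ∈ A := by
    intro x hx y hy
    refine (memA _).mp ⟨mul_mem (hAM x hx) (hAM y hy), ?_⟩
    intro a ha
    rw [← mul_assoc, hAc x hx a ha, mul_assoc, hAc y hy a ha, ← mul_assoc]
  have haddA : ∀ x ∈ A, ∀ y ∈ A, x + y ∈ A := by
    intro x hx y hy
    refine (memA _).mp ⟨add_mem (hAM x hx) (hAM y hy), ?_⟩
    intro a ha
    rw [mul_add, hAc x hx a ha, hAc y hy a ha, add_mul]
  have honeA : (1 : H →L[ℂ] H) ∈ A := by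
    refine (memA _).mp ⟨one_mem M, ?_⟩
    intro a _; rw [mul_one, one_mul]
  have hsubA : ∀ x ∈ A, ∀ y ∈ A, x - y ∈ A := by
    intro x hx y hy
    refine (memA _).mp ⟨sub_mem (hAM x hx) (hAM y hy), ?_⟩
    intro a ha
    rw [mul_sub, hAc x hx a ha, hAc y hy a ha, sub_mul]
  have h1mp : (1 : H →L[ℂ] H) - p ∈ A := hsubA 1 honeA p hpA
  obtain ⟨m, hmM, hum⟩ := hu
  have hpM : p ∈ M := hAM p hpA
  have huM : u ∈ M := by rw [hum]; exact mul_mem (mul_mem hpM hmM) hpM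
  have hup : u * p = u := by rw [hum, mul_assoc (p * m), hproj]
  have hpu : p * u = u := by rw [hum, ← mul_assoc, ← mul_assoc, hproj]
  have hsup : star u * p = star u := by rw [← hpstar, ← star_mul, hpu]
  have hpsu : p * star u = star u := by rw [← hpstar, ← star_mul, hup]
  set v : H →L[ℂ] H := u + (1 - p) with hv
  have hsv : star v = star u + (1 - p) := by
    rw [hv, star_add, star_sub, star_one, hpstar]
  have hvM : v ∈ M := add_mem huM (sub_mem (one_mem M) hpM)
  have h1p1p : ((1 : H →L[ℂ] H) - p) * (1 - p) = 1 - p := by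
    rw [sub_mul, one_mul, mul_sub, mul_one, hproj, sub_self, sub_zero]
  have hvv : v * star v = 1 := by
    rw [hv, hsv, add_mul, mul_add, mul_add]
    have h1 : u * (1 - p) = 0 := by rw [mul_sub, mul_one, hup, sub_self]
    have h2 : (1 - p) * star u = 0 := by rw [sub_mul, one_mul, hpsu, sub_self]
    rw [huu', h1, h2, h1p1p, add_zero, zero_add]
    abel
  have hv'v : star v * v = 1 := by
    rw [hv, hsv, add_mul, mul_add, mul_add]
    have h1 : star u * (1 - p) = 0 := by rw [mul_sub, mul_one, hsup, sub_self]
    have h2 : (1 - p) * u = 0 := by rw [sub_mul, one_mul, hpu, sub_self]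
    rw [hu'u, h1, h2, h1p1p, add_zero, zero_add]
    abel
  -- conjugation by u maps the corner of A into the corner of A
  have hcorner : ∀ a ∈ A, ∃ b ∈ A, u * (p * a * p) * star u = p * b * p := by
    intro a ha
    have hmemset : p * a * p ∈ {x | ∃ a ∈ A, x = p * a * p} := ⟨a, ha, rfl⟩
    have hmem : u * (p * a * p) * star u ∈
        (fun x => u * x * star u) '' {x | ∃ a ∈ A, x = p * a * p} :=
      ⟨_, hmemset, rfl⟩
    rw [himg] at hmem
    obtain ⟨b, hb, heq⟩ := hmem
    exact ⟨b, hb, heq⟩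
  have hcorner' : ∀ a ∈ A, ∃ b ∈ A, star u * (p * a * p) * u = p * b * p := by
    intro a ha
    have hmem : p * a * p ∈ {x | ∃ a ∈ A, x = p * a * p} := ⟨a, ha, rfl⟩
    rw [← himg] at hmem
    obtain ⟨x, ⟨c, hc, hxc⟩, hx⟩ := hmem
    refine ⟨c, hc, ?_⟩
    simp only at hx
    rw [← hx, hxc]
    calc star u * (u * (p * c * p) * star u) * u
        = (star u * u) * (p * c * p) * (star u * u) := by noncomm_ring
      _ = p * c * p := by
          rw [hu'u, ← mul_assoc, ← mul_assoc, hproj, mul_assoc (p * c), hproj]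
  -- key expansion lemmas
  have hexp : ∀ a ∈ A, v * a * star v = u * (p * a * p) * star u + (1 - p) * a * (1 - p) := by
    intro a ha
    have hap : a * p = p * a := hAc p hpA a ha
    have hcorep : ∀ w : H →L[ℂ] H, w * p = w → w * (p * a * p) = w * a := by
      intro w hw
      rw [← hap, mul_assoc a p p, hproj, hap, ← mul_assoc, hw]
    have h1 : u * a * (1 - p) = 0 := by
      have h : u * a * p = u * a := by rw [mul_assoc, hap, ← mul_assoc, hup]
      rw [mul_sub, mul_one, h, sub_self]
    have h2 : (1 - p) * a * star u = 0 := by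
      have h : p * a * star u = a * star u := by rw [← hap, mul_assoc, hpsu]
      rw [sub_mul, one_mul, sub_mul, h, sub_self]
    calc v * a * star v
        = u * a * star u + u * a * (1 - p)
          + ((1 - p) * a * star u + (1 - p) * a * (1 - p)) := by
          rw [hv, hsv]; noncomm_ring
      _ = u * (p * a * p) * star u + (1 - p) * a * (1 - p) := by
          rw [h1, h2, ← hcorep u hup, add_zero, zero_add]
  have hexp' : ∀ a ∈ A, star v * a * v
      = star u * (p * a * p) * u + (1 - p) * a * (1 - p) := by
    intro a ha
    have hap : a * p = p * a := hAc p hpA a ha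
    have hcorep : ∀ w : H →L[ℂ] H, w * p = w → w * (p * a * p) = w * a := by
      intro w hw
      rw [← hap, mul_assoc a p p, hproj, hap, ← mul_assoc, hw]
    have h1 : star u * a * (1 - p) = 0 := by
      have h : star u * a * p = star u * a := by rw [mul_assoc, hap, ← mul_assoc, hsup]
      rw [mul_sub, mul_one, h, sub_self]
    have h2 : (1 - p) * a * u = 0 := by
      have h : p * a * u = a * u := by rw [← hap, mul_assoc, hpu]
      rw [sub_mul, one_mul, sub_mul, h, sub_self]
    calc star v * a * v
        = star u * a * u + star u * a * (1 - p)
          + ((1 - p) * a * u + (1 - p) * a * (1 - p)) := by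
          rw [hv, hsv]; noncomm_ring
      _ = star u * (p * a * p) * u + (1 - p) * a * (1 - p) := by
          rw [h1, h2, ← hcorep (star u) hsup, add_zero, zero_add]
  have himgA : (fun x => v * x * star v) '' A = A := by
    ext x
    constructor
    · rintro ⟨a, ha, rfl⟩
      simp only
      rw [hexp a ha]
      obtain ⟨b, hb, heq⟩ := hcorner a ha
      rw [heq]
      exact haddA _ (hmulA _ (hmulA p hpA b hb) p hpA) _
        (hmulA _ (hmulA _ h1mp a ha) _ h1mp)
    · intro hx
      refine ⟨star v * x * v, ?_, ?_⟩
      · rw [hexp' x hx]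
        obtain ⟨b, hb, heq⟩ := hcorner' x hx
        rw [heq]
        exact haddA _ (hmulA _ (hmulA p hpA b hb) p hpA) _
          (hmulA _ (hmulA _ h1mp x hx) _ h1mp)
      · simp only
        calc v * (star v * x * v) * star v
            = (v * star v) * x * (v * star v) := by noncomm_ring
          _ = x := by rw [hvv, one_mul, mul_one]
  have hvA : v ∈ A := hsing v hvM hvv hv'v himgA
  refine ⟨v, hvA, ?_⟩
  rw [hv, mul_add, mul_sub, mul_one, hproj, sub_self, add_zero, hpu, hup]
end

section
/- For block matrices: let F be an (n+m)×(n+m) complex matrix with blocks F11, F12, F21, F22, let G be n×n and H be m×m. If 1 − F11 G is invertible, then det(1 − F(G ⊕ H)) = det(1 − F11 G) · det(1 − Ex(F,G)·H), where Ex(F,G) = F22 + F21 G (1 − F11 G)^{-1} F12. -/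
/-- Block-matrix determinant identity underlying the execution formula:
if `1 - F₁₁ G` is invertible then
`det (1 - F (G ⊕ H)) = det (1 - F₁₁ G) * det (1 - Ex(F,G) H)` where
`Ex(F,G) = F₂₂ + F₂₁ G (1 - F₁₁ G)⁻¹ F₁₂`. -/
theorem stmt_14 {n m : ℕ}
    (F11 : Matrix (Fin n) (Fin n) ℂ) (F12 : Matrix (Fin n) (Fin m) ℂ)
    (F21 : Matrix (Fin m) (Fin n) ℂ) (F22 : Matrix (Fin m) (Fin m) ℂ)
    (G : Matrix (Fin n) (Fin n) ℂ) (Hm : Matrix (Fin m) (Fin m) ℂ)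
    (hinv : IsUnit (1 - F11 * G)) :
    (1 - Matrix.fromBlocks F11 F12 F21 F22 * Matrix.fromBlocks G 0 0 Hm).det
      = (1 - F11 * G).det
        * (1 - (F22 + F21 * G * (1 - F11 * G)⁻¹ * F12) * Hm).det := by
  have hI : Invertible (1 - F11 * G) := hinv.invertible
  have h1 : 1 -
      Matrix.fromBlocks F11 F12 F21 F22 * Matrix.fromBlocks G 0 0 Hm
      = Matrix.fromBlocks (1 - F11 * G) (-(F12 * Hm)) (-(F21 * G)) (1 - F22 * Hm) := by
    rw [Matrix.fromBlocks_multiply, ← Matrix.fromBlocks_one]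
    ext i j
    rcases i with i | i <;> rcases j with j | j <;>
      simp [Matrix.fromBlocks, Matrix.mul_zero, Matrix.zero_mul]
  rw [h1, Matrix.det_fromBlocks₁₁]
  congr 2
  rw [Matrix.invOf_eq_nonsing_inv]
  simp only [Matrix.neg_mul, Matrix.mul_neg, neg_neg, Matrix.add_mul, Matrix.mul_assoc, sub_sub]
end

section
/- The submonoid generated by a = ((δ_{n,0})_n, 0) and b = ((0)_n, 1) in the semidirect product ℤ^{(ℤ)} ⋊ ℤ (with ℤ acting by shift) is free: the map from words in the free monoid on two generators to group elements given by a^{p_k} b^{q_k} ⋯ a^{p_1} b^{q_1} ↦ ((p̄_n)_n, Σ q_i) is injective, where p̄_n = p_i when n = Σ_{j=1}^{i} q_j and 0 otherwise. -/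
/-- The group `ℤ^(ℤ) ⋊ ℤ`, with `ℤ` acting by shift, realized on the carrier
`(ℤ →₀ ℤ) × ℤ`. The shift: `(shiftZ p y) n = y (n + p)`. -/
noncomputable def shiftZ (p : ℤ) (y : ℤ →₀ ℤ) : ℤ →₀ ℤ :=
  Finsupp.equivMapDomain (Equiv.subRight p) y

/-- The semidirect product multiplication
`((xₙ), p) · ((yₙ), q) = ((xₙ + y_{n+p}), p + q)`. -/
noncomputable def gMul (g h : (ℤ →₀ ℤ) × ℤ) : (ℤ →₀ ℤ) × ℤ :=
  (g.1 + shiftZ g.2 h.1, g.2 + h.2)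

/-- The generator `a = ((δ_{n,0})ₙ, 0)`. -/
noncomputable def genA : (ℤ →₀ ℤ) × ℤ := (Finsupp.single 0 1, 0)

/-- The generator `b = ((0)ₙ, 1)`. -/
noncomputable def genB : (ℤ →₀ ℤ) × ℤ := (0, 1)

/-- The product in `ℤ^(ℤ) ⋊ ℤ` of a word in the two generators `a`, `b`. -/
noncomputable def wordProd (w : List (Fin 2)) : (ℤ →₀ ℤ) × ℤ :=
  w.foldr (fun i g => gMul (if i = 0 then genA else genB) g) (0, 0)

lemma shiftZ_apply (p : ℤ) (y : ℤ →₀ ℤ) (n : ℤ) : shiftZ p y n = y (n + p) := by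
  simp [shiftZ, Finsupp.equivMapDomain_apply]

lemma shiftZ_zero (y : ℤ →₀ ℤ) : shiftZ 0 y = y := by
  ext n; rw [shiftZ_apply, add_zero]

lemma wordProd_nil : wordProd [] = (0, 0) := rfl

lemma wordProd_cons (i : Fin 2) (w : List (Fin 2)) :
    wordProd (i :: w) = gMul (if i = 0 then genA else genB) (wordProd w) := rfl

lemma cons_a (w : List (Fin 2)) :
    wordProd ((0 : Fin 2) :: w) = (Finsupp.single 0 1 + (wordProd w).1, (wordProd w).2) := by
  rw [wordProd_cons, if_pos rfl]
  show (Finsupp.single 0 1 + shiftZ 0 (wordProd w).1, 0 + (wordProd w).2) = _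
  rw [shiftZ_zero, zero_add]

lemma cons_b (w : List (Fin 2)) :
    wordProd ((1 : Fin 2) :: w) = (shiftZ 1 (wordProd w).1, 1 + (wordProd w).2) := by
  rw [wordProd_cons, if_neg (by decide)]
  show ((0 : ℤ →₀ ℤ) + shiftZ 1 (wordProd w).1, 1 + (wordProd w).2) = _
  rw [zero_add]

lemma single_app (n : ℤ) : (Finsupp.single 0 1 : ℤ →₀ ℤ) n = if n = 0 then 1 else 0 := by
  rw [Finsupp.single_apply]
  by_cases h : n = 0 <;> simp [h, eq_comm]

lemma wordProd_inv (w : List (Fin 2)) :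
    (∀ n : ℤ, 1 ≤ n → (wordProd w).1 n = 0) ∧ 0 ≤ (wordProd w).1 0 ∧ 0 ≤ (wordProd w).2 := by
  induction w with
  | nil => simp [wordProd_nil]
  | cons i w ih =>
    obtain ⟨h1, h2, h3⟩ := ih
    have hi : i = 0 ∨ i = 1 := by omega
    rcases hi with rfl | rfl
    · rw [cons_a]
      refine ⟨fun n hn => ?_, ?_, h3⟩
      · show ((Finsupp.single 0 1 + (wordProd w).1 : ℤ →₀ ℤ)) n = 0
        rw [Finsupp.add_apply, single_app, h1 n hn, if_neg (by omega), add_zero]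
      · show (0:ℤ) ≤ ((Finsupp.single 0 1 + (wordProd w).1 : ℤ →₀ ℤ)) 0
        rw [Finsupp.add_apply, single_app, if_pos rfl]
        omega
    · rw [cons_b]
      refine ⟨fun n hn => ?_, ?_, by show (0:ℤ) ≤ 1 + (wordProd w).2; omega⟩
      · show shiftZ 1 (wordProd w).1 n = 0
        rw [shiftZ_apply, h1 (n + 1) (by omega)]
      · show (0:ℤ) ≤ shiftZ 1 (wordProd w).1 0
        rw [shiftZ_apply, h1 (0 + 1) (by omega)]

/-- The submonoid of `ℤ^(ℤ) ⋊ ℤ` generated by `a` and `b` is free: distinct words in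
the free monoid on two generators have distinct products. -/
theorem stmt_15 : Function.Injective wordProd := by
  intro w₁ w₂ h
  induction w₁ generalizing w₂ with
  | nil =>
    cases w₂ with
    | nil => rfl
    | cons j w₂ =>
      exfalso
      obtain ⟨h1, h2, h3⟩ := wordProd_inv w₂
      have hj : j = 0 ∨ j = 1 := by omega
      rcases hj with rfl | rfl
      · rw [wordProd_nil, cons_a, Prod.ext_iff] at h
        have h1' : (0 : ℤ →₀ ℤ) = Finsupp.single 0 1 + (wordProd w₂).1 := h.1
        have := congrArg (fun f => f 0) h1'
        simp only [Finsupp.coe_zero, Pi.zero_apply, Finsupp.add_apply, single_app,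
          if_pos rfl, if_true] at this
        omega
      · rw [wordProd_nil, cons_b, Prod.ext_iff] at h
        have h2' : (0 : ℤ) = 1 + (wordProd w₂).2 := h.2
        omega
  | cons i w₁ ih =>
    cases w₂ with
    | nil =>
      exfalso
      obtain ⟨h1, h2, h3⟩ := wordProd_inv w₁
      have hi : i = 0 ∨ i = 1 := by omega
      rcases hi with rfl | rfl
      · rw [wordProd_nil, cons_a, Prod.ext_iff] at h
        have h1' : Finsupp.single 0 1 + (wordProd w₁).1 = (0 : ℤ →₀ ℤ) := h.1
        have := congrArg (fun f => f 0) h1'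
        simp only [Finsupp.coe_zero, Pi.zero_apply, Finsupp.add_apply, single_app,
          if_pos rfl, if_true] at this
        omega
      · rw [wordProd_nil, cons_b, Prod.ext_iff] at h
        have h2' : 1 + (wordProd w₁).2 = (0 : ℤ) := h.2
        omega
    | cons j w₂ =>
      obtain ⟨g1, g2, g3⟩ := wordProd_inv w₁
      obtain ⟨k1, k2, k3⟩ := wordProd_inv w₂
      have hi : i = 0 ∨ i = 1 := by omega
      have hj : j = 0 ∨ j = 1 := by omega
      rcases hi with rfl | rfl <;> rcases hj with rfl | rfl
      · -- a a
        rw [cons_a, cons_a, Prod.ext_iff] at h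
        have h1' : Finsupp.single 0 1 + (wordProd w₁).1
            = Finsupp.single 0 1 + (wordProd w₂).1 := h.1
        have hf : (wordProd w₁).1 = (wordProd w₂).1 := add_left_cancel h1'
        have hq : (wordProd w₁).2 = (wordProd w₂).2 := h.2
        exact congrArg _ (ih (Prod.ext hf hq))
      · -- a b
        exfalso
        rw [cons_a, cons_b, Prod.ext_iff] at h
        have h1' : Finsupp.single 0 1 + (wordProd w₁).1 = shiftZ 1 (wordProd w₂).1 := h.1
        have := congrArg (fun f => f 0) h1' 
        simp only [Finsupp.add_apply, single_app, if_pos rfl, if_true, shiftZ_apply] at this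
        rw [k1 (0 + 1) (by omega)] at this
        omega
      · -- b a
        exfalso
        rw [cons_b, cons_a, Prod.ext_iff] at h
        have h1' : shiftZ 1 (wordProd w₁).1 = Finsupp.single 0 1 + (wordProd w₂).1 := h.1
        have := congrArg (fun f => f 0) h1' 
        simp only [Finsupp.add_apply, single_app, if_pos rfl, if_true, shiftZ_apply] at this
        rw [g1 (0 + 1) (by omega)] at this
        omega
      · -- b b
        rw [cons_b, cons_b, Prod.ext_iff] at h
        have h1' : shiftZ 1 (wordProd w₁).1 = shiftZ 1 (wordProd w₂).1 := h.1
        have h2' : 1 + (wordProd w₁).2 = 1 + (wordProd w₂).2 := h.2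
        have hf : (wordProd w₁).1 = (wordProd w₂).1 := by
          ext n
          have := congrArg (fun f => f (n - 1)) h1'
          simp only [shiftZ_apply, sub_add_cancel] at this
          exact this
        have hq : (wordProd w₁).2 = (wordProd w₂).2 := by omega
        exact congrArg _ (ih (Prod.ext hf hq))
end
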